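/- arXiv:math/0005062 — 2 statements merged into one kernel-verified Lean document; each statement's English description precedes it below -/
import Mathlib

section
/- If 𝒫 is a nonempty admissible, linearly repetitive set of abstract patterns in ℝ^d, then for every r ≥ 0 the set of pattern classes P ∈ 𝒫 with r_out(P) ≤ r is finite. -/
open Metric Set Filter MeasureTheory Topology

noncomputable section

/-- Points of `ℝ^d`. -/
abbrev Pt (d : ℕ) := EuclideanSpace ℝ (Fin d)

variable (d : ℕ)

/-- A tile: a subset of `ℝ^d` homeomorphic to the closed unit ball. -/
def IsTile (m : Set (Pt d)) : Prop :=
  Nonempty (m ≃ₜ (Metric.closedBall (0 : Pt d) 1))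

/-- A pattern: a finite nonempty collection of tiles whose interiors are pairwise disjoint. -/
def IsPattern (M : Set (Set (Pt d))) : Prop :=
  M.Finite ∧ M.Nonempty ∧ (∀ m ∈ M, IsTile d m) ∧
    M.Pairwise fun m m' => interior m ∩ interior m' = ∅

/-- A tiling of `ℝ^d`: a collection of tiles with pairwise disjoint interiors covering `ℝ^d`. -/
def IsTiling (T : Set (Set (Pt d))) : Prop :=
  (∀ m ∈ T, IsTile d m) ∧
    (T.Pairwise fun m m' => interior m ∩ interior m' = ∅) ∧ ⋃₀ T = Set.univ

/-- Translation of a pattern by `t`. -/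
def patTrans (t : Pt d) (M : Set (Set (Pt d))) : Set (Set (Pt d)) :=
  (fun m => (fun x => x + t) '' m) '' M

/-- Support (underlying set) of a pattern. -/
def supp (M : Set (Set (Pt d))) : Set (Pt d) := ⋃₀ M

/-- Inner radius: the largest `r` such that some closed ball of radius `r` fits inside `s(M)`. -/
def rIn (M : Set (Set (Pt d))) : ℝ :=
  sSup {r : ℝ | ∃ x : Pt d, Metric.closedBall x r ⊆ supp d M}

/-- Outer radius: the smallest `r` such that some closed ball of radius `r` contains `s(M)`. -/
def rOut (M : Set (Set (Pt d))) : ℝ :=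
  sInf {r : ℝ | ∃ x : Pt d, supp d M ⊆ Metric.closedBall x r}

/-- The pattern class of `P` is a subpattern of (the class of) `Q`:
some translate of `P` is contained in `Q`. -/
def SubpatternClass (P Q : Set (Set (Pt d))) : Prop :=
  ∃ t : Pt d, patTrans d t P ⊆ Q

/-- A set of abstract patterns is modelled as a translation-closed set `Ps` of concrete
patterns (the union of the pattern classes).  `Admissible` encodes conditions
(i)–(iii) of Definition 2.1. -/
structure Admissible (Ps : Set (Set (Set (Pt d)))) : Prop where
  pattern : ∀ P ∈ Ps, IsPattern d P
  transClosed : ∀ (t : Pt d), ∀ P ∈ Ps, patTrans d t P ∈ Ps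
  subClosed : ∀ P ∈ Ps, ∀ Q : Set (Set (Pt d)), IsPattern d Q → Q ⊆ P → Q ∈ Ps
  tileBounds : ∃ rmin rmax : ℝ, 0 < rmin ∧ rmin ≤ rmax ∧
    ∀ m : Set (Pt d), ({m} : Set (Set (Pt d))) ∈ Ps →
      rmin ≤ rIn d {m} ∧ rIn d {m} ≤ rOut d {m} ∧ rOut d {m} ≤ rmax
  extend : ∀ P ∈ Ps, (0 : Pt d) ∈ supp d P → ∀ r : ℝ, 0 < r →
    ∃ Q ∈ Ps, P ⊆ Q ∧ Metric.closedBall (0 : Pt d) r ⊆ supp d Q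

/-- Linear repetitivity of a (translation-closed) set of patterns. -/
def LinearlyRepetitive (Ps : Set (Set (Set (Pt d)))) : Prop :=
  ∃ c : ℝ, 0 < c ∧ ∀ P ∈ Ps, 1 ≤ rOut d P →
    ∀ Q ∈ Ps, c * rOut d P ≤ rIn d Q → SubpatternClass d P Q

/-- The box determined by corner functions `a b : Fin d → ℝ`. -/
def boxSet (a b : Fin d → ℝ) : Set (Pt d) := {x | ∀ j, x j ∈ Set.Icc (a j) (b j)}

/-- `B` is a box. -/
def IsBox (B : Set (Pt d)) : Prop :=
  ∃ a b : Fin d → ℝ, (∀ j, a j < b j) ∧ B = boxSet d a b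

/-- `B` is an `r`-box: all side lengths lie in `[r, 2r]`. -/
def IsRBox (r : ℝ) (B : Set (Pt d)) : Prop :=
  ∃ a b : Fin d → ℝ, (∀ j, a j < b j) ∧ B = boxSet d a b ∧
    ∀ j, r ≤ b j - a j ∧ b j - a j ≤ 2 * r

/-- Width of a box: the minimum of its side lengths. -/
def widthOf (B : Set (Pt d)) : ℝ :=
  ⨅ j : Fin d, (sSup ((fun x : Pt d => x j) '' B) - sInf ((fun x : Pt d => x j) '' B))

/-- Volume of a subset of `ℝ^d`. -/
def volOf (B : Set (Pt d)) : ℝ := (volume B).toReal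

/-- Restriction `M ∩ B` of a pattern or tiling `M` to `B`. -/
def patRestrict (M : Set (Set (Pt d))) (B : Set (Pt d)) : Set (Set (Pt d)) :=
  {s | ∃ m ∈ M, (m ∩ interior B).Nonempty ∧ s = m ∩ B}

/-- The set `Ps_B` of box-patterns derived from `Ps` (concrete representatives). -/
def BoxPatterns (Ps : Set (Set (Set (Pt d)))) : Set (Set (Set (Pt d))) :=
  {Q | ∃ P ∈ Ps, ∃ B : Set (Pt d), IsBox d B ∧ B ⊆ supp d P ∧ Q = patRestrict d P B}

/-- The set `Ps(r)` of `r`-patterns derived from `Ps`. -/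
def RPatterns (Ps : Set (Set (Set (Pt d)))) (r : ℝ) : Set (Set (Set (Pt d))) :=
  {Q | ∃ P ∈ Ps, ∃ B : Set (Pt d), IsRBox d r B ∧ B ⊆ supp d P ∧ Q = patRestrict d P B}

/-- Width of a box-pattern. -/
def patWidth (M : Set (Set (Pt d))) : ℝ := widthOf d (supp d M)

/-- Volume of a box-pattern. -/
def patVol (M : Set (Set (Pt d))) : ℝ := volOf d (supp d M)

/-- A subadditive function on `Ps_B`, with constants `dF, rF` and error function `cF`.
`F` is defined on concrete patterns and is translation-invariant (i.e. well defined on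
pattern classes). -/
structure SubadditiveOn (Ps : Set (Set (Set (Pt d)))) (F : Set (Set (Pt d)) → ℝ)
    (dF rF : ℝ) (cF : ℝ → ℝ) : Prop where
  invariant : ∀ (t : Pt d), ∀ M ∈ BoxPatterns d Ps, F (patTrans d t M) = F M
  dF_nonneg : 0 ≤ dF
  rF_nonneg : 0 ≤ rF
  cF_anti : ∀ r s : ℝ, rF ≤ r → r ≤ s → cF s ≤ cF r
  cF_lim : Tendsto cF atTop (nhds 0)
  subadd : ∀ M ∈ BoxPatterns d Ps, ∀ (n : ℕ) (Bj : Fin n → Set (Pt d)),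
    (∀ j, IsBox d (Bj j)) →
    (∀ i j, i ≠ j → interior (Bj i) ∩ interior (Bj j) = ∅) →
    (⋃ j, Bj j) = supp d M →
    (∀ j, rF ≤ widthOf d (Bj j)) →
    F M ≤ (∑ j, F (patRestrict d M (Bj j))) +
      ∑ j, cF (widthOf d (Bj j)) * volOf d (Bj j)
  bound : ∀ M ∈ BoxPatterns d Ps, |F M| ≤ dF * patVol d M

/-- The upper mean `F⁺(r)`. -/
def Fplus (Ps : Set (Set (Set (Pt d)))) (F : Set (Set (Pt d)) → ℝ) (r : ℝ) : ℝ :=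
  sSup ((fun P => F P / patVol d P) '' RPatterns d Ps r)

/-- The lower mean `F⁻(r)`. -/
def Fminus (Ps : Set (Set (Set (Pt d)))) (F : Set (Set (Pt d)) → ℝ) (r : ℝ) : ℝ :=
  sInf ((fun P => F P / patVol d P) '' RPatterns d Ps r)

/-!
Fix one pattern `Q₀ ∈ Ps` whose inner radius is large compared with `r`. A pattern `P` of outer
radius at most `r`, translated so that its support contains the origin, lies in a ball of radius
`R = 2r + 2`. Extending it to cover that ball and discarding the tiles that miss the ball yields
`Q ∈ Ps` with `R ≤ r_out(Q) ≤ R + 2 r_max + 2`, since tiles have outer radius at most `r_max`.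
Linear repetitivity then places a translate of `Q`, hence of `P`, inside `Q₀`. So every such `P`
is a translate of one of the finitely many subpatterns of `Q₀`.
-/

section Geometry

variable {E : Type*} [NormedAddCommGroup E] [NormedSpace ℝ E] [Nontrivial E]

lemma le_of_closedBall_subset_closedBall {x y : E} {R R' : ℝ} (hR : 0 ≤ R)
    (h : closedBall x R ⊆ closedBall y R') : R ≤ R' := by
  have hR' : 0 ≤ R' := dist_nonneg.trans (h (mem_closedBall_self hR))
  have := (diam_mono h isBounded_closedBall).trans (diam_closedBall hR')
  rw [diam_closedBall_eq x hR] at this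
  linarith

end Geometry

lemma subset_closedBall_of_inter_closedBall_nonempty {α : Type*} [PseudoMetricSpace α]
    {s : Set α} {x y : α} {R ρ : ℝ} (hs : s ⊆ closedBall y ρ)
    (hx : (s ∩ closedBall x R).Nonempty) : s ⊆ closedBall x (R + 2 * ρ) := by
  obtain ⟨z, hzs, hzx⟩ := hx
  intro w hw
  rw [mem_closedBall] at hzx ⊢
  calc dist w x ≤ dist w y + dist y z + dist z x := dist_triangle4 _ _ _ _
    _ ≤ ρ + ρ + R := by
      gcongr
      · exact hs hw
      · rw [dist_comm]; exact hs hzs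
    _ = R + 2 * ρ := by ring

section Patterns

variable {d}

lemma patTrans_zero (M : Set (Set (Pt d))) : patTrans d 0 M = M := by
  simp [patTrans]

lemma patTrans_patTrans (s t : Pt d) (M : Set (Set (Pt d))) :
    patTrans d t (patTrans d s M) = patTrans d (s + t) M := by
  simp only [patTrans, image_image, add_assoc]

lemma supp_patTrans (t : Pt d) (M : Set (Set (Pt d))) :
    supp d (patTrans d t M) = (· + t) '' supp d M := by
  simp only [supp, patTrans, image_sUnion]

lemma zero_mem_supp_patTrans_neg {M : Set (Set (Pt d))} {p : Pt d} (hp : p ∈ supp d M) :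
    (0 : Pt d) ∈ supp d (patTrans d (-p) M) := by
  rw [supp_patTrans]
  exact ⟨p, hp, add_neg_cancel p⟩

lemma IsTile.nonempty {m : Set (Pt d)} (h : IsTile d m) : m.Nonempty := by
  obtain ⟨e⟩ := h
  exact ⟨_, (e.symm ⟨0, mem_closedBall_self zero_le_one⟩).2⟩

lemma IsTile.isCompact {m : Set (Pt d)} (h : IsTile d m) : IsCompact m := by
  obtain ⟨e⟩ := h
  have : CompactSpace (closedBall (0 : Pt d) 1) :=
    isCompact_iff_compactSpace.mp (isCompact_closedBall 0 1)
  exact isCompact_iff_compactSpace.mpr e.symm.compactSpace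

lemma IsPattern.mono {P Q : Set (Set (Pt d))} (hP : IsPattern d P) (hQP : Q ⊆ P)
    (hQ : Q.Nonempty) : IsPattern d Q :=
  ⟨hP.1.subset hQP, hQ, fun m hm => hP.2.2.1 m (hQP hm), hP.2.2.2.mono hQP⟩

lemma IsPattern.supp_nonempty {P : Set (Set (Pt d))} (hP : IsPattern d P) :
    (supp d P).Nonempty := by
  obtain ⟨m, hm⟩ := hP.2.1
  obtain ⟨z, hz⟩ := (hP.2.2.1 m hm).nonempty
  exact ⟨z, subset_sUnion_of_mem hm hz⟩

lemma IsPattern.isBounded_supp {P : Set (Set (Pt d))} (hP : IsPattern d P) :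
    Bornology.IsBounded (supp d P) :=
  (hP.1.isCompact_sUnion fun m hm => (hP.2.2.1 m hm).isCompact).isBounded

lemma IsPattern.eq_singleton_univ [Subsingleton (Pt d)] {P : Set (Set (Pt d))}
    (hP : IsPattern d P) : P = {univ} :=
  (hP.2.1.subset_singleton_iff).mp fun m hm => (hP.2.2.1 m hm).nonempty.eq_univ

lemma rOut_le_of_supp_subset_closedBall {M : Set (Set (Pt d))} {x : Pt d} {R : ℝ}
    (hne : (supp d M).Nonempty) (h : supp d M ⊆ closedBall x R) : rOut d M ≤ R := by
  refine csInf_le ⟨0, ?_⟩ ⟨x, h⟩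
  rintro r' ⟨y, hy⟩
  obtain ⟨z, hz⟩ := hne
  exact dist_nonneg.trans (hy hz)

lemma exists_supp_subset_closedBall_of_rOut_lt {M : Set (Set (Pt d))}
    (hb : Bornology.IsBounded (supp d M)) {R : ℝ} (h : rOut d M < R) :
    ∃ x, supp d M ⊆ closedBall x R := by
  obtain ⟨R₀, hR₀⟩ := (isBounded_iff_subset_closedBall (0 : Pt d)).mp hb
  obtain ⟨s, ⟨y, hy⟩, hs⟩ := exists_lt_of_csInf_lt (by exact ⟨R₀, 0, hR₀⟩) h
  exact ⟨y, hy.trans (closedBall_subset_closedBall hs.le)⟩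

variable [Nontrivial (Pt d)]

lemma le_rOut_of_closedBall_subset_supp {M : Set (Set (Pt d))} {x : Pt d} {R : ℝ}
    (hR : 0 ≤ R) (hball : closedBall x R ⊆ supp d M)
    (hb : Bornology.IsBounded (supp d M)) : R ≤ rOut d M := by
  obtain ⟨R₀, hR₀⟩ := (isBounded_iff_subset_closedBall (0 : Pt d)).mp hb
  refine le_csInf ⟨R₀, 0, hR₀⟩ ?_
  rintro s ⟨y, hy⟩
  exact le_of_closedBall_subset_closedBall hR (hball.trans hy)

lemma le_rIn_of_closedBall_subset_supp {M : Set (Set (Pt d))} {x : Pt d} {R : ℝ}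
    (hball : closedBall x R ⊆ supp d M) (hb : Bornology.IsBounded (supp d M)) :
    R ≤ rIn d M := by
  obtain ⟨R₀, hR₀⟩ := (isBounded_iff_subset_closedBall (0 : Pt d)).mp hb
  refine le_csSup ⟨max 0 R₀, ?_⟩ ⟨x, hball⟩
  rintro s ⟨y, hy⟩
  rcases le_or_gt s 0 with hs | hs
  · exact le_max_of_le_left hs
  · exact le_max_of_le_right (le_of_closedBall_subset_closedBall hs.le (hy.trans hR₀))

end Patterns

namespace Admissible

variable {d} {Ps : Set (Set (Set (Pt d)))}

lemma exists_tile_subset_closedBall (hadm : Admissible d Ps) {rmax : ℝ}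
    (hmax : ∀ m, ({m} : Set (Set (Pt d))) ∈ Ps → rOut d {m} ≤ rmax)
    {Q : Set (Set (Pt d))} (hQ : Q ∈ Ps) {m : Set (Pt d)} (hm : m ∈ Q) :
    ∃ y, m ⊆ closedBall y (rmax + 1) := by
  have hmQ : ({m} : Set (Set (Pt d))) ⊆ Q := singleton_subset_iff.mpr hm
  have hpat : IsPattern d {m} := (hadm.pattern Q hQ).mono hmQ (singleton_nonempty m)
  have hmPs := hadm.subClosed Q hQ _ hpat hmQ
  simpa [supp] using exists_supp_subset_closedBall_of_rOut_lt hpat.isBounded_supp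
    ((hmax m hmPs).trans_lt (lt_add_one rmax))

lemma exists_rIn_ge [Nontrivial (Pt d)] (hadm : Admissible d Ps) (hne : Ps.Nonempty) (ρ : ℝ) :
    ∃ Q ∈ Ps, ρ ≤ rIn d Q := by
  obtain ⟨P, hP⟩ := hne
  obtain ⟨p, hp⟩ := (hadm.pattern P hP).supp_nonempty
  obtain ⟨Q, hQ, -, hball⟩ := hadm.extend _ (hadm.transClosed (-p) P hP)
    (zero_mem_supp_patTrans_neg hp) (max 1 ρ) (zero_lt_one.trans_le (le_max_left 1 ρ))
  exact ⟨Q, hQ, (le_max_right 1 ρ).trans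
    (le_rIn_of_closedBall_subset_supp hball (hadm.pattern Q hQ).isBounded_supp)⟩

lemma exists_superpattern_between_closedBalls (hadm : Admissible d Ps) {rmax : ℝ}
    (hmax : ∀ m, ({m} : Set (Set (Pt d))) ∈ Ps → rOut d {m} ≤ rmax)
    {P : Set (Set (Pt d))} (hP : P ∈ Ps) (h0 : (0 : Pt d) ∈ supp d P) {R : ℝ} (hR : 0 < R)
    (hPR : supp d P ⊆ closedBall 0 R) :
    ∃ Q ∈ Ps, P ⊆ Q ∧ closedBall 0 R ⊆ supp d Q ∧
      supp d Q ⊆ closedBall 0 (R + 2 * (rmax + 1)) := by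
  obtain ⟨Q₁, hQ₁, hPQ₁, hball⟩ := hadm.extend P hP h0 R hR
  set Q := {m ∈ Q₁ | (m ∩ closedBall 0 R).Nonempty}
  have hballQ : closedBall 0 R ⊆ supp d Q := fun z hz => by
    obtain ⟨m, hm, hzm⟩ := mem_sUnion.mp (hball hz)
    exact subset_sUnion_of_mem (show m ∈ Q from ⟨hm, z, hzm, hz⟩) hzm
  have hQne : Q.Nonempty := by
    obtain ⟨m, hm, -⟩ := mem_sUnion.mp (hballQ (mem_closedBall_self hR.le))
    exact ⟨m, hm⟩
  have hQpat : IsPattern d Q := (hadm.pattern Q₁ hQ₁).mono (sep_subset _ _) hQne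
  refine ⟨Q, hadm.subClosed Q₁ hQ₁ Q hQpat (sep_subset _ _), fun m hm => ⟨hPQ₁ hm, ?_⟩,
    hballQ, sUnion_subset fun m hm => ?_⟩
  · obtain ⟨z, hz⟩ := ((hadm.pattern P hP).2.2.1 m hm).nonempty
    exact ⟨z, hz, hPR (subset_sUnion_of_mem hm hz)⟩
  · obtain ⟨y, hy⟩ := hadm.exists_tile_subset_closedBall hmax hQ₁ hm.1
    exact subset_closedBall_of_inter_closedBall_nonempty hy hm.2

end Admissible

variable {d} in
theorem LinearlyRepetitive.exists_patTrans_subset [Nontrivial (Pt d)]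
    {Ps : Set (Set (Set (Pt d)))} (hlr : LinearlyRepetitive d Ps) (hne : Ps.Nonempty)
    (hadm : Admissible d Ps) {r : ℝ} (hr : 0 ≤ r) :
    ∃ Q₀ ∈ Ps, ∀ P ∈ Ps, rOut d P ≤ r → ∃ t, patTrans d t P ⊆ Q₀ := by
  obtain ⟨c, hc, hLR⟩ := hlr
  obtain ⟨_, rmax, -, -, htile⟩ := hadm.tileBounds
  set R := 2 * (r + 1)
  set R' := R + 2 * (rmax + 1)
  obtain ⟨Q₀, hQ₀, hQ₀R'⟩ := hadm.exists_rIn_ge hne (c * R')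
  refine ⟨Q₀, hQ₀, fun P hP hPr => ?_⟩
  have hPpat := hadm.pattern P hP
  obtain ⟨p, hp⟩ := hPpat.supp_nonempty
  obtain ⟨x, hx⟩ := exists_supp_subset_closedBall_of_rOut_lt hPpat.isBounded_supp
    (hPr.trans_lt (lt_add_one r))
  have hPR : supp d (patTrans d (-p) P) ⊆ closedBall 0 R := by
    rw [supp_patTrans]
    rintro _ ⟨w, hw, rfl⟩
    have hwx := mem_closedBall.mp (hx hw)
    have hpx := mem_closedBall.mp (hx hp)
    show dist (w + -p) 0 ≤ R
    rw [dist_zero_right, ← sub_eq_add_neg, ← dist_eq_norm]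
    linarith [dist_triangle_right w p x]
  obtain ⟨Q, hQ, hPQ, hballQ, hQball⟩ := hadm.exists_superpattern_between_closedBalls
    (fun m hm => (htile m hm).2.2) (hadm.transClosed (-p) P hP)
    (zero_mem_supp_patTrans_neg hp) (by positivity) hPR
  have hRQ : R ≤ rOut d Q := le_rOut_of_closedBall_subset_supp (by positivity) hballQ
    (hadm.pattern Q hQ).isBounded_supp
  have hQR' : rOut d Q ≤ R' :=
    rOut_le_of_supp_subset_closedBall (hadm.pattern Q hQ).supp_nonempty hQball
  obtain ⟨t, ht⟩ := hLR Q hQ (by linarith) Q₀ hQ₀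
    ((mul_le_mul_of_nonneg_left hQR' hc.le).trans hQ₀R')
  exact ⟨-p + t, by rw [← patTrans_patTrans]; exact (image_mono hPQ).trans ht⟩

variable {d} in
lemma Admissible.exists_patTrans_subset_of_subsingleton [Subsingleton (Pt d)]
    {Ps : Set (Set (Set (Pt d)))} (hadm : Admissible d Ps) (hne : Ps.Nonempty) :
    ∃ Q₀ ∈ Ps, ∀ P ∈ Ps, ∃ t, patTrans d t P ⊆ Q₀ := by
  obtain ⟨Q₀, hQ₀⟩ := hne
  refine ⟨Q₀, hQ₀, fun P hP => ⟨0, ?_⟩⟩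
  rw [patTrans_zero, (hadm.pattern P hP).eq_singleton_univ,
    (hadm.pattern Q₀ hQ₀).eq_singleton_univ]

/-- finiteness observation in Appendix A. In a nonempty admissible
linearly repetitive set of abstract patterns, for every `r ≥ 0` there are only finitely
many pattern classes with outer radius at most `r`: there is a finite set of
representatives such that every such pattern is a translate of one of them. -/
theorem finitely_many_pattern_classes (d : ℕ) (Ps : Set (Set (Set (Pt d))))
    (hne : Ps.Nonempty) (hadm : Admissible d Ps) (hlr : LinearlyRepetitive d Ps) :
    ∀ r : ℝ, 0 ≤ r → ∃ Q : Set (Set (Set (Pt d))), Q.Finite ∧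
      ∀ P ∈ Ps, rOut d P ≤ r → ∃ P₀ ∈ Q, ∃ t : Pt d, P = patTrans d t P₀ := by
  intro r hr
  obtain ⟨Q₀, hQ₀, hsub⟩ : ∃ Q₀ ∈ Ps, ∀ P ∈ Ps, rOut d P ≤ r → ∃ t, patTrans d t P ⊆ Q₀ := by
    cases d with
    | zero =>
      obtain ⟨Q₀, hQ₀, h⟩ := hadm.exists_patTrans_subset_of_subsingleton hne
      exact ⟨Q₀, hQ₀, fun P hP _ => h P hP⟩
    | succ n => exact hlr.exists_patTrans_subset hne hadm hr
  refine ⟨{S | S ⊆ Q₀}, (hadm.pattern Q₀ hQ₀).1.finite_subsets, fun P hP hPr => ?_⟩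
  obtain ⟨t, ht⟩ := hsub P hP hPr
  exact ⟨patTrans d t P, ht, -t, by rw [patTrans_patTrans, add_neg_cancel, patTrans_zero]⟩
end
end

section
/- For every sequence (a_n)_{n≥1} of positive integers and every n ≥ 1, G(s_{n−1}s_n) ≥ G(s_n) + |s_{n−1}| + |s_n|; equivalently, G(s_{n−1}s_n)/|s_{n−1}s_n| ≥ G(s_n)/(|s_{n−1}| + |s_n|) + 1. -/
/-!
Every summand of `G` is monotone under prepending a word, since occurrences in `y` shift to
occurrences in `x ++ y`. For `x = s_{n-1}` and `y = s_n` the summand indexed by `s_{n-1} s_n`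
itself vanishes at `y`, which is too short to contain it, and is at least `|s_{n-1}| + |s_n|`
at `x ++ y`, which is that word. The terms of `G(w)` vanish from index `|w|` on, because
`|s_n| ≥ n`, so `G` is an honest finite sum and the summandwise comparison passes to it.
-/

open Filter

noncomputable section

/-- `k`-fold concatenation of a word. -/
def wpow (w : List Bool) : ℕ → List Bool
  | 0 => []
  | n + 1 => w ++ wpow w n

/-- The standard Sturmian words `s_{-1}, s_0, s_1, s_2, …` associated to a sequence
`(a_n)_{n ≥ 1}` of positive integers (the continued fraction coefficients):
`st a 0 = s_{-1} = 1`, `st a 1 = s_0 = 0`, `st a 2 = s_1 = s_0^{a_1 - 1} s_{-1}` and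
`st a (n+1) = s_n = s_{n-1}^{a_n} s_{n-2}` for `n ≥ 2` (`false` plays the role of the
letter `0` and `true` of the letter `1`). -/
def st (a : ℕ → ℕ) : ℕ → List Bool
  | 0 => [true]
  | 1 => [false]
  | 2 => wpow [false] (a 1 - 1) ++ [true]
  | n + 3 => wpow (st a (n + 2)) (a (n + 2)) ++ st a (n + 1)

/-- The set `𝒲` of Sturmian words: all subwords of some `s_n`, `n ≥ 0`. -/
def sturmW (a : ℕ → ℕ) : Set (List Bool) :=
  {w | ∃ n : ℕ, 1 ≤ n ∧ w <:+: st a n}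

/-- A subadditive function on a set of words: `F(uv) ≤ F(u) + F(v)` whenever `u`, `v`
and `uv` all belong to `W`, together with a linear bound `|F(w)| ≤ d·|w|`. -/
def WordSubadditive (W : Set (List Bool)) (F : List Bool → ℝ) : Prop :=
  (∀ u v : List Bool, u ∈ W → v ∈ W → u ++ v ∈ W → F (u ++ v) ≤ F u + F v) ∧
    ∃ dd : ℝ, 0 ≤ dd ∧ ∀ w ∈ W, |F w| ≤ dd * w.length

/-- Number of occurrences of `v` as a subword of `w`: the number of indices
`0 ≤ i ≤ |w| - |v|` with `v = w_{i+1} ⋯ w_{i+|v|}`. -/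
def occ (v w : List Bool) : ℕ :=
  ((Finset.range (w.length + 1 - v.length)).filter
    fun i => (w.drop i).take v.length = v).card

/-- The superadditive weight `G(w) = Σ_{n ≥ 1} #_{s_{n-1} s_n}(w) · (|s_{n-1}| + |s_n|)`
(all but finitely many terms vanish). -/
def Gfun (a : ℕ → ℕ) (w : List Bool) : ℝ :=
  ∑' n : ℕ, (occ (st a (n + 1) ++ st a (n + 2)) w : ℝ) *
    (((st a (n + 1)).length : ℝ) + ((st a (n + 2)).length : ℝ))

theorem Summable.tsum_add_le_tsum_of_le {ι : Type*} {f g : ι → ℝ} (hf : Summable f)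
    (hg : Summable g) (hfg : ∀ i, f i ≤ g i) (i₀ : ι) {c : ℝ} (hc : f i₀ + c ≤ g i₀) :
    ∑' i, f i + c ≤ ∑' i, g i := by
  classical
  have hδ : HasSum (Pi.single i₀ c : ι → ℝ) c := hasSum_pi_single i₀ c
  calc ∑' i, f i + c = ∑' i, (f i + (Pi.single i₀ c : ι → ℝ) i) := by
        rw [hf.tsum_add hδ.summable, hδ.tsum_eq]
    _ ≤ ∑' i, g i := by
        refine Summable.tsum_le_tsum (fun i => ?_) (hf.add hδ.summable) hg
        rcases eq_or_ne i i₀ with rfl | hi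
        · simpa using hc
        · simpa [hi] using hfg i

lemma wpow_length (w : List Bool) : ∀ n, (wpow w n).length = n * w.length
  | 0 => by simp [wpow]
  | n + 1 => by simp [wpow, wpow_length w n]; ring

lemma st_length_pos (a : ℕ → ℕ) : ∀ n, 0 < (st a n).length
  | 0 | 1 | 2 => by simp [st]
  | n + 3 => by
      have := st_length_pos a (n + 1)
      simp only [st, List.length_append]
      omega

lemma le_st_length (a : ℕ → ℕ) (ha : ∀ n, 1 ≤ a n) : ∀ n, n ≤ (st a (n + 1)).length
  | 0 => Nat.zero_le _
  | 1 => by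
      have := ha 1
      simp only [st, List.length_append, wpow_length, List.length_singleton]
      omega
  | n + 2 => by
      have := le_st_length a ha (n + 1)
      have := st_length_pos a (n + 1)
      have := ha (n + 2)
      show n + 2 ≤ (st a (n + 3)).length
      simp only [st, List.length_append, wpow_length]
      nlinarith

lemma occ_eq_zero_of_length_lt {v w : List Bool} (h : w.length < v.length) : occ v w = 0 := by
  simp [occ, Nat.sub_eq_zero_of_le (Nat.succ_le_of_lt h)]

lemma one_le_occ_self (v : List Bool) : 1 ≤ occ v v :=
  Finset.card_pos.mpr ⟨0, by simp⟩

lemma occ_le_occ_append_left (v x y : List Bool) : occ v y ≤ occ v (x ++ y) := by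
  refine Finset.card_le_card_of_injOn (x.length + ·) (fun i hi => ?_)
    (fun i _ j _ h => by simpa using h)
  simp only [Finset.coe_filter, Finset.mem_range, Set.mem_ofPred_eq] at hi ⊢
  refine ⟨by simp only [List.length_append]; omega, ?_⟩
  rw [List.drop_append, List.drop_eq_nil_of_le (Nat.le_add_right x.length i)]
  simpa using hi.2

def Gterm (a : ℕ → ℕ) (w : List Bool) (n : ℕ) : ℝ :=
  (occ (st a (n + 1) ++ st a (n + 2)) w : ℝ) *
    (((st a (n + 1)).length : ℝ) + ((st a (n + 2)).length : ℝ))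

lemma Gfun_eq_tsum_Gterm (a : ℕ → ℕ) (w : List Bool) : Gfun a w = ∑' n, Gterm a w n := rfl

section Gterm

variable {a : ℕ → ℕ}

lemma Gterm_eq_zero (ha : ∀ n, 1 ≤ a n) {w : List Bool} {n : ℕ} (hn : w.length ≤ n) :
    Gterm a w n = 0 := by
  have := le_st_length a ha n
  have := st_length_pos a (n + 2)
  rw [Gterm, occ_eq_zero_of_length_lt (by simp only [List.length_append]; omega)]
  simp

lemma summable_Gterm (ha : ∀ n, 1 ≤ a n) (w : List Bool) : Summable (Gterm a w) :=
  summable_of_ne_finset_zero (s := Finset.range w.length) fun _ hn =>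
    Gterm_eq_zero ha (by simpa using hn)

lemma Gterm_le_Gterm_append_left (x y : List Bool) (n : ℕ) :
    Gterm a y n ≤ Gterm a (x ++ y) n :=
  mul_le_mul_of_nonneg_right (by exact_mod_cast occ_le_occ_append_left _ x y) (by positivity)

lemma Gterm_add_length_le (n : ℕ) :
    Gterm a (st a (n + 2)) n + (st a (n + 1)).length + (st a (n + 2)).length ≤
      Gterm a (st a (n + 1) ++ st a (n + 2)) n := by
  have hshort : occ (st a (n + 1) ++ st a (n + 2)) (st a (n + 2)) = 0 :=
    occ_eq_zero_of_length_lt (by simp [st_length_pos a (n + 1)])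
  have hself : (1 : ℝ) ≤ occ (st a (n + 1) ++ st a (n + 2)) (st a (n + 1) ++ st a (n + 2)) := by
    exact_mod_cast one_le_occ_self _
  simp only [Gterm, hshort, Nat.cast_zero, zero_mul, zero_add]
  exact le_mul_of_one_le_left (by positivity) hself

end Gterm

/-- For every `n ≥ 1`, `G(s_{n-1} s_n) ≥ G(s_n) + |s_{n-1}| + |s_n|`;
equivalently `G(s_{n-1}s_n)/|s_{n-1}s_n| ≥ G(s_n)/(|s_{n-1}| + |s_n|) + 1`.
(Here `s_n = st a (n+1)` and `s_{n-1} = st a n`, so the claim is stated for `k ≥ 1`.) -/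
theorem Gfun_cat_lower_bound (a : ℕ → ℕ) (ha : ∀ n, 1 ≤ a n) :
    ∀ k : ℕ, 1 ≤ k →
      Gfun a (st a (k + 1)) + ((st a k).length : ℝ) + ((st a (k + 1)).length : ℝ) ≤
        Gfun a (st a k ++ st a (k + 1)) ∧
      Gfun a (st a (k + 1)) / (((st a k).length : ℝ) + ((st a (k + 1)).length : ℝ)) + 1 ≤
        Gfun a (st a k ++ st a (k + 1)) / ((st a k ++ st a (k + 1)).length : ℝ) := by
  intro k hk
  obtain ⟨m, rfl⟩ : ∃ m, k = m + 1 := ⟨k - 1, by omega⟩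
  have hlen : (0 : ℝ) < (st a (m + 1)).length + (st a (m + 2)).length := by
    have := st_length_pos a (m + 1)
    positivity
  have key : Gfun a (st a (m + 2)) + (st a (m + 1)).length + (st a (m + 2)).length ≤
      Gfun a (st a (m + 1) ++ st a (m + 2)) := by
    rw [Gfun_eq_tsum_Gterm, Gfun_eq_tsum_Gterm, add_assoc]
    refine (summable_Gterm ha _).tsum_add_le_tsum_of_le (summable_Gterm ha _)
      (Gterm_le_Gterm_append_left _ _) m ?_
    simpa only [add_assoc] using Gterm_add_length_le m
  refine ⟨key, ?_⟩
  rw [List.length_append, Nat.cast_add, div_add_one hlen.ne', div_le_div_iff_of_pos_right hlen]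
  linarith
end
end
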